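/- Let G be a finitely generated group, n a natural number, and S a normal subgroup of G containing the n-th term γ_n(G) of the lower central series of G. Then the quotient group S/[G,S], where [G,S] is the subgroup generated by all commutators g·s·g⁻¹·s⁻¹ with g ∈ G and s ∈ S, is a finitely generated commutative group. -/

import Mathlib

/-!
Induction on `n`. Given `S ⊇ γ_{n+1}(G) = [G, Γ]` with `Γ = γ_n(G)`, put `T = S Γ`; by induction
`Γ/[G,Γ]` and `T/[G,T]` are finitely generated. The inclusion `S ≤ T` induces
`S/[G,S] → T/[G,T]`, whose image is finitely generated as a subgroup of a finitely generated
abelian group. Since `[G,T] = [G,S][G,Γ]`, its kernel is generated by the classes of the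
commutators `[g,c]` with `g ∈ G`, `c ∈ Γ`. Modulo `[G,S]` the map `(g,c) ↦ [g,c]` is
multiplicative in each variable and factors through `G × Γ/[G,Γ]`, so the kernel is generated by
its values on pairs of generators, finitely many.
-/

open Subgroup
open scoped Pointwise commutatorElement

theorem Subgroup.fg_of_commGroup {A : Type*} [CommGroup A] [Group.FG A] (B : Subgroup A) :
    B.FG := by
  have : Module.Finite ℤ (Additive A) :=
    Module.Finite.iff_addGroup_fg.2 (GroupFG.iff_add_fg.1 ‹_›)
  rw [fg_iff_add_fg]
  simpa using (Submodule.fg_iff_addSubgroup_fg _).1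
    (IsNoetherian.noetherian B.toAddSubgroup.toIntSubmodule)

theorem Group.fg_of_fg_ker_of_fg_range {A B : Type*} [Group A] [Group B] (f : A →* B)
    (hker : f.ker.FG) (hrange : f.range.FG) : Group.FG A := by
  obtain ⟨X, hX, hXfin⟩ := (Subgroup.fg_iff _).1 hker
  obtain ⟨Y, -, hYfin, hY⟩ : ∃ Y ⊆ Set.univ, Y.Finite ∧ closure (f '' Y) = f.range := by
    obtain ⟨Z, hZ, hZfin⟩ := (Subgroup.fg_iff _).1 hrange
    refine Set.exists_subset_image_finite_and (p := fun Y ↦ Subgroup.closure Y = f.range) |>.1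
      ⟨Z, ?_, hZfin, hZ⟩
    rw [Set.image_univ, ← MonoidHom.coe_range, ← hZ]
    exact subset_closure
  refine Group.fg_iff.2 ⟨X ∪ Y, eq_top_iff.2 fun a _ ↦ ?_, hXfin.union hYfin⟩
  obtain ⟨y, hy, hya⟩ : f a ∈ (closure Y).map f := by
    rw [MonoidHom.map_closure, hY]
    exact ⟨a, rfl⟩
  have hker : y⁻¹ * a ∈ closure X := by
    rw [hX, MonoidHom.mem_ker, map_mul, map_inv, hya, inv_mul_cancel]
  simpa using mul_mem (closure_mono Set.subset_union_right hy)
    (closure_mono Set.subset_union_left hker)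

theorem MonoidHom.closure_range_eq_closure_image2 {G H A : Type*} [Group G] [Group H]
    [CommGroup A] (φ : G →* H →* A) {U : Set G} {V : Set H} (hU : closure U = ⊤)
    (hV : closure V = ⊤) :
    closure (Set.range fun p : G × H ↦ φ p.1 p.2) = closure (Set.image2 (φ · ·) U V) := by
  set Z := closure (Set.image2 (φ · ·) U V)
  refine le_antisymm (closure_le _ |>.2 ?_) (closure_mono ?_)
  · have hU' : ∀ v ∈ V, closure U ≤ Z.comap (φ.flip v) :=
      fun v hv ↦ closure_le _ |>.2 fun u hu ↦ subset_closure (Set.mem_image2_of_mem hu hv)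
    have hV' : ∀ g, closure V ≤ Z.comap (φ g) :=
      fun g ↦ closure_le _ |>.2 fun v hv ↦ hU' v hv (hU ▸ mem_top g)
    rintro _ ⟨⟨g, h⟩, rfl⟩
    exact hV' g (hV ▸ mem_top h)
  · rintro _ ⟨u, -, v, -, rfl⟩
    exact ⟨(u, v), rfl⟩

theorem Subgroup.commutator_sup_right {G : Type*} [Group G] (H K L : Subgroup G) [H.Normal]
    [L.Normal] : ⁅H, K ⊔ L⁆ = ⁅H, K⁆ ⊔ ⁅H, L⁆ := by
  refine le_antisymm ?_ (sup_le (commutator_mono le_rfl le_sup_left)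
    (commutator_mono le_rfl le_sup_right))
  rw [commutator_le]
  intro h hh x hx
  obtain ⟨k, hk, l, hl, rfl⟩ : x ∈ (K : Set G) * L := by rwa [← mul_normal K L]
  have : ⁅h, k * l⁆ = ⁅h, k⁆ * (k * ⁅h, l⁆ * k⁻¹) := by group
  rw [this]
  exact mul_mem (mem_sup_left (commutator_mem_commutator hh hk))
    (mem_sup_right ((commutator_normal H L).conj_mem _ (commutator_mem_commutator hh hl) k))

/-- `S/[G,S]`, the coinvariants of the conjugation action of `G` on `S`. -/
abbrev Subgroup.ConjCoinvariants {G : Type*} [Group G] (S : Subgroup G) : Type _ :=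
  S ⧸ ⁅(⊤ : Subgroup G), S⁆.subgroupOf S

namespace Subgroup.ConjCoinvariants

variable {G : Type*} [Group G]

section Quotient

variable {S : Subgroup G}

theorem mk_conj (g : G) {x : G} (hx : x ∈ S) (hgx : g * x * g⁻¹ ∈ S) :
    (⟨g * x * g⁻¹, hgx⟩ : S) = ((⟨x, hx⟩ : S) : S.ConjCoinvariants) := by
  rw [QuotientGroup.eq, mem_subgroupOf]
  have : ((⟨g * x * g⁻¹, hgx⟩⁻¹ * ⟨x, hx⟩ : S) : G) = ⁅g, x⁻¹⁆ := by
    simp only [coe_mul, coe_inv, commutatorElement_def]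
    group
  rw [this]
  exact commutator_mem_commutator (mem_top g) (inv_mem hx)

variable [S.Normal]

theorem mk_commutator (g : G) {x : G} (hx : x ∈ S) (hgx : ⁅g, x⁆ ∈ S) :
    (⟨⁅g, x⁆, hgx⟩ : S) = (1 : S.ConjCoinvariants) := by
  rw [QuotientGroup.eq_one_iff, mem_subgroupOf]
  exact commutator_mem_commutator (mem_top g) hx

instance : CommGroup S.ConjCoinvariants :=
  { QuotientGroup.Quotient.group _ with
    mul_comm := by
      intro x y
      induction x using QuotientGroup.induction_on with | _ a =>
      induction y using QuotientGroup.induction_on with | _ b =>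
      have hab : a * b = ⟨a * b * (a : G)⁻¹, Normal.conj_mem ‹_› _ b.2 a⟩ * a := by ext; simp
      rw [← QuotientGroup.mk_mul, hab, QuotientGroup.mk_mul, mk_conj _ b.2] }

def map {T : Subgroup G} [T.Normal] (h : S ≤ T) : S.ConjCoinvariants →* T.ConjCoinvariants :=
  QuotientGroup.map _ _ (inclusion h) fun x hx ↦ by
    simpa [mem_subgroupOf] using commutator_mono le_rfl h hx

end Quotient

section Pairing

variable {K L : Subgroup G}

theorem commutator_mem (hLK : ⁅(⊤ : Subgroup G), L⁆ ≤ K) (g : G) {c : G} (hc : c ∈ L) :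
    ⁅g, c⁆ ∈ K :=
  hLK (commutator_mem_commutator (mem_top g) hc)

variable [K.Normal] (hLK : ⁅(⊤ : Subgroup G), L⁆ ≤ K)

def commutatorClass (g : G) (c : L) : K.ConjCoinvariants :=
  (⟨⁅g, (c : G)⁆, commutator_mem hLK g c.2⟩ : K)

theorem commutatorClass_mul_right (g : G) (c d : L) :
    commutatorClass hLK g (c * d) = commutatorClass hLK g c * commutatorClass hLK g d := by
  have hconj : (c : G) * ⁅g, (d : G)⁆ * (c : G)⁻¹ ∈ K :=
    Normal.conj_mem ‹_› _ (commutator_mem hLK g d.2) c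
  calc commutatorClass hLK g (c * d)
      = ((⟨⁅g, (c : G)⁆, commutator_mem hLK g c.2⟩ *
          ⟨(c : G) * ⁅g, (d : G)⁆ * (c : G)⁻¹, hconj⟩ : K) : K.ConjCoinvariants) := by
        unfold commutatorClass
        congr 1
        ext
        simp only [coe_mul, commutatorElement_def]
        group
    _ = commutatorClass hLK g c * commutatorClass hLK g d := by
        rw [QuotientGroup.mk_mul, mk_conj _ (commutator_mem hLK g d.2)]
        rfl

theorem commutatorClass_mul_left (g h : G) (c : L) :
    commutatorClass hLK (g * h) c = commutatorClass hLK g c * commutatorClass hLK h c := by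
  have hconj : g * ⁅h, (c : G)⁆ * g⁻¹ ∈ K :=
    Normal.conj_mem ‹_› _ (commutator_mem hLK h c.2) g
  calc commutatorClass hLK (g * h) c
      = ((⟨g * ⁅h, (c : G)⁆ * g⁻¹, hconj⟩ * ⟨⁅g, (c : G)⁆, commutator_mem hLK g c.2⟩ : K) :
          K.ConjCoinvariants) := by
        unfold commutatorClass
        congr 1
        ext
        simp only [coe_mul, commutatorElement_def]
        group
    _ = commutatorClass hLK h c * commutatorClass hLK g c := by
        rw [QuotientGroup.mk_mul, mk_conj _ (commutator_mem hLK h c.2)]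
        rfl
    _ = commutatorClass hLK g c * commutatorClass hLK h c := mul_comm _ _

theorem commutatorClass_eq_one (g : G) (c : L) (hc : (c : G) ∈ K) :
    commutatorClass hLK g c = 1 :=
  mk_commutator g hc _

variable [L.Normal]

def commutatorPairing : G →* L.ConjCoinvariants →* K.ConjCoinvariants :=
  MonoidHom.mk'
    (fun g ↦ QuotientGroup.lift _
      (MonoidHom.mk' (commutatorClass hLK g) (commutatorClass_mul_right hLK g))
      fun c hc ↦ commutatorClass_eq_one hLK g c (hLK (mem_subgroupOf.1 hc)))
    fun g h ↦ QuotientGroup.monoidHom_ext _ <| MonoidHom.ext <| commutatorClass_mul_left hLK g h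

theorem ker_map_le_sup_left :
    (map (le_sup_left : K ≤ K ⊔ L)).ker =
      closure (Set.range fun p : G × L.ConjCoinvariants ↦ commutatorPairing hLK p.1 p.2) := by
  set Z := closure (Set.range fun p : G × L.ConjCoinvariants ↦ commutatorPairing hLK p.1 p.2)
  refine le_antisymm (fun x hx ↦ ?_) (closure_le _ |>.2 ?_)
  · induction x using QuotientGroup.induction_on with | _ s =>
    have hs : (s : G) ∈ ⁅(⊤ : Subgroup G), K⁆ ⊔ ⁅(⊤ : Subgroup G), L⁆ := by
      rw [← commutator_sup_right]
      simpa [map, QuotientGroup.eq_one_iff, mem_subgroupOf] using hx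
    let W : Subgroup G := (Z.comap (QuotientGroup.mk' _)).map K.subtype
    have hKW : ⁅(⊤ : Subgroup G), K⁆ ≤ W := fun k hk ↦
      ⟨⟨k, commutator_le_right _ _ hk⟩, by
        rw [SetLike.mem_coe, mem_comap, QuotientGroup.mk'_apply,
          (QuotientGroup.eq_one_iff _).2 (mem_subgroupOf.2 hk)]
        exact one_mem Z, rfl⟩
    have hLW : ⁅(⊤ : Subgroup G), L⁆ ≤ W := commutator_le.2 fun g _ c hc ↦
      ⟨⟨⁅g, c⁆, commutator_mem hLK g hc⟩, subset_closure ⟨(g, (⟨c, hc⟩ : L)), rfl⟩, rfl⟩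
    obtain ⟨t, ht, hts⟩ := sup_le hKW hLW hs
    rwa [← Subtype.ext hts]
  · rintro _ ⟨⟨g, c⟩, rfl⟩
    induction c using QuotientGroup.induction_on with | _ c =>
    exact mk_commutator g (mem_sup_right c.2) _

end Pairing

variable [Group.FG G]

theorem fg_of_commutator_le {K L : Subgroup G} [K.Normal] [L.Normal]
    (hLK : ⁅(⊤ : Subgroup G), L⁆ ≤ K) [Group.FG L.ConjCoinvariants]
    [Group.FG (K ⊔ L).ConjCoinvariants] : Group.FG K.ConjCoinvariants := by
  obtain ⟨U, hU, hUfin⟩ := Group.fg_iff.1 ‹Group.FG G›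
  obtain ⟨V, hV, hVfin⟩ := Group.fg_iff.1 ‹Group.FG L.ConjCoinvariants›
  refine Group.fg_of_fg_ker_of_fg_range (map (le_sup_left : K ≤ K ⊔ L)) ?_
    (by exact fg_of_commGroup _)
  rw [ker_map_le_sup_left hLK, (commutatorPairing hLK).closure_range_eq_closure_image2 hU hV]
  exact (fg_iff _).2 ⟨_, rfl, hUfin.image2 _ hVfin⟩

theorem fg_of_lowerCentralSeries_le (n : ℕ) (S : Subgroup G) [S.Normal]
    (hS : (⊤ : Subgroup G).lowerCentralSeries n ≤ S) : Group.FG S.ConjCoinvariants := by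
  induction n generalizing S with
  | zero =>
    obtain rfl : S = ⊤ := top_le_iff.1 hS
    have : Group.FG (⊤ : Subgroup G) := (Group.fg_iff_subgroup_fg ⊤).2 (Group.fg_def.1 ‹_›)
    infer_instance
  | succ n ih =>
    have : Group.FG ((⊤ : Subgroup G).lowerCentralSeries n).ConjCoinvariants := ih _ le_rfl
    have : Group.FG (S ⊔ (⊤ : Subgroup G).lowerCentralSeries n).ConjCoinvariants :=
      ih _ le_sup_right
    have hΓ : ⁅(⊤ : Subgroup G), (⊤ : Subgroup G).lowerCentralSeries n⁆ ≤ S := by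
      rwa [commutator_comm]
    exact fg_of_commutator_le hΓ

end Subgroup.ConjCoinvariants

theorem finitely_generated_abelian_quotient
    (G : Type*) [Group G] [Group.FG G] (n : ℕ) (S : Subgroup G) [S.Normal]
    (hS : (⊤ : Subgroup G).lowerCentralSeries n ≤ S) :
    Group.FG (S ⧸ (⁅(⊤ : Subgroup G), S⁆.subgroupOf S)) ∧
      ∀ x y : S ⧸ (⁅(⊤ : Subgroup G), S⁆.subgroupOf S), x * y = y * x :=
  ⟨Subgroup.ConjCoinvariants.fg_of_lowerCentralSeries_le n S hS, mul_comm⟩
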